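/- arXiv:2305.03646 — 5 statements merged into one kernel-verified Lean document; each statement's English description precedes it below -/
import Mathlib

section
/- Suppose λ is a real number such that φ·ξ = λξ where ξ is a nonzero spinor, vol₇·ξ = −ξ, and φ·ψ = 7·vol₇ − 6φ with ψ = φ·vol₇ in the Clifford algebra. Then λ = 7 or λ = −1. -/
/-! On the eigenvector `ξ`, `φ ψ = φ φ vol₇` acts as `-λ²` while `7 vol₇ - 6 φ` acts as `-7 - 6λ`,
so `λ² = 6λ + 7`, whose roots are `7` and `-1`. -/

theorem eq_seven_or_eq_neg_one_of_mul_self_eq {R : Type*} [CommRing R] [NoZeroDivisors R]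
    {x : R} (h : x * x = 6 * x + 7) : x = 7 ∨ x = -1 := by
  have hfactor : (x - 7) * (x + 1) = 0 := by linear_combination h
  rcases mul_eq_zero.mp hfactor with h7 | h1
  · exact Or.inl (sub_eq_zero.mp h7)
  · exact Or.inr (eq_neg_of_add_eq_zero_left h1)

theorem mul_self_smul_eq_of_comp_eq {R S : Type*} [CommRing R] [AddCommGroup S] [Module R S]
    {cphi vol : S →ₗ[R] S} {ξ : S} {lam : R} (hvol : vol ξ = -ξ)
    (hmul : cphi ∘ₗ cphi ∘ₗ vol = (7 : R) • vol - (6 : R) • cphi) (heig : cphi ξ = lam • ξ) :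
    (lam * lam) • ξ = (6 * lam + 7) • ξ := by
  have hcomp := congrArg (fun f : S →ₗ[R] S => -f ξ) hmul
  simp only [LinearMap.comp_apply, LinearMap.sub_apply, LinearMap.smul_apply, hvol, heig,
    map_neg, map_smul] at hcomp
  rw [neg_neg, smul_neg, neg_sub, sub_neg_eq_add, smul_smul] at hcomp
  rw [hcomp, add_smul, mul_smul]

/-- If φ·ξ = λξ for a nonzero spinor ξ with vol₇·ξ = −ξ,
ψ = φ·vol₇ and φ·ψ = 7·vol₇ − 6φ (as operators), then λ = 7 or λ = −1. -/
theorem stmt_4 {S : Type*} [AddCommGroup S] [Module ℝ S]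
    (cphi cpsi vol : S →ₗ[ℝ] S) (ξ : S) (hξ : ξ ≠ 0) (lam : ℝ)
    (hvol : vol ξ = -ξ)
    (hpsi : cpsi = cphi ∘ₗ vol)
    (hmul : cphi ∘ₗ cpsi = (7 : ℝ) • vol - (6 : ℝ) • cphi)
    (heig : cphi ξ = lam • ξ) :
    lam = 7 ∨ lam = -1 := by
  subst hpsi
  exact eq_seven_or_eq_neg_one_of_mul_self_eq <|
    smul_left_injective ℝ hξ (mul_self_smul_eq_of_comp_eq hvol hmul heig)
end

section
/- Under the isomorphism s : Λ⁰ ⊕ Λ¹ → S(X) given by (f, v) ↦ (f − v)·ξ, Clifford multiplication by a 1-form u satisfies u·(f, v) = (⟨u, v⟩, −fu − (u ∧ v) ⌟ φ). -/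
section CliffordOneForms

variable {Ω1 Ω2 S : Type*} [AddCommGroup Ω1] [Module ℝ Ω1]
  [AddCommGroup Ω2] [Module ℝ Ω2] [AddCommGroup S] [Module ℝ S]
  (cl1 : Ω1 →ₗ[ℝ] S →ₗ[ℝ] S) (cl2 : Ω2 →ₗ[ℝ] S →ₗ[ℝ] S)
  (contr : Ω2 →ₗ[ℝ] Ω1) (wedge : Ω1 →ₗ[ℝ] Ω1 →ₗ[ℝ] Ω2) (ip : Ω1 →ₗ[ℝ] Ω1 →ₗ[ℝ] ℝ)

theorem cl1_cl1_apply_eq_neg_cl1_contr {ξ : S} {u v : Ω1}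
    (hclrel : cl1 u ∘ₗ cl1 v = cl2 (wedge u v) - ip u v • LinearMap.id)
    (h2form : cl2 (wedge u v) ξ = -(cl1 (contr (wedge u v)) ξ)) :
    cl1 u (cl1 v ξ) = -(cl1 (contr (wedge u v)) ξ) - ip u v • ξ := by
  rw [← h2form, ← LinearMap.comp_apply, hclrel]
  rfl

end CliffordOneForms

/-- Under the isomorphism s : Λ⁰ ⊕ Λ¹ → S(X), (f, v) ↦ (f − v)·ξ = f•ξ − v·ξ,
Clifford multiplication by a 1-form u satisfies u·(f, v) = (⟨u, v⟩, −fu − (u ∧ v) ⌟ φ).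
Here `cl1`, `cl2` are Clifford multiplication by 1-forms and 2-forms, `wedge` the wedge
product of 1-forms, `ip` the inner product, `contr` the contraction ω ↦ ω ⌟ φ; the Clifford
relation u·v = u∧v − ⟨u,v⟩ and the identity ω·ξ = −(ω ⌟ φ)·ξ are hypotheses. -/
theorem stmt_6 {Ω1 Ω2 S : Type*} [AddCommGroup Ω1] [Module ℝ Ω1]
    [AddCommGroup Ω2] [Module ℝ Ω2] [AddCommGroup S] [Module ℝ S]
    (cl1 : Ω1 →ₗ[ℝ] S →ₗ[ℝ] S) (cl2 : Ω2 →ₗ[ℝ] S →ₗ[ℝ] S)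
    (contr : Ω2 →ₗ[ℝ] Ω1) (wedge : Ω1 →ₗ[ℝ] Ω1 →ₗ[ℝ] Ω2)
    (ip : Ω1 →ₗ[ℝ] Ω1 →ₗ[ℝ] ℝ) (ξ : S)
    (hclrel : ∀ u v : Ω1, cl1 u ∘ₗ cl1 v = cl2 (wedge u v) - ip u v • LinearMap.id)
    (h2form : ∀ ω : Ω2, cl2 ω ξ = -(cl1 (contr ω) ξ)) :
    ∀ (f : ℝ) (u v : Ω1),
      cl1 u ((fun p : ℝ × Ω1 => p.1 • ξ - cl1 p.2 ξ) (f, v)) =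
        (fun p : ℝ × Ω1 => p.1 • ξ - cl1 p.2 ξ)
          (ip u v, -(f • u) - contr (wedge u v)) := by
  intro f u v
  have huv := cl1_cl1_apply_eq_neg_cl1_contr cl1 cl2 contr wedge ip (hclrel u v) (h2form _)
  simp only [map_sub, map_smul, map_neg, LinearMap.sub_apply, LinearMap.neg_apply,
    LinearMap.smul_apply, huv]
  abel
end

section
/- Suppose D⁻_{A_C}(r^{λ−1} Σ_{j=0}^m (log r)^j η_j) = 0 with η_m ≠ 0, where D⁻_{A_C} = dr·(∂/∂r + (1/r)(7/2 − D_{A_Σ})) and D_{A_Σ} is self-adjoint. Then m = 0; i.e., homogeneous solutions have no polynomial log terms. -/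
/-!
With `t = log r`, the ansatz is `r ^ (λ - 1) • P (log r)` for the vector polynomial
`P t = ∑ tʲ • ηⱼ`, and the equation becomes `(λ + 5/2) • P t - D (P t) + P' t = 0` for all `t`.
Comparing the coefficients of `tᵐ` and `tᵐ⁻¹` gives `D ηₘ = (λ + 5/2) • ηₘ` and
`(D - λ - 5/2) ηₘ₋₁ = m • ηₘ`. A symmetric operator has no Jordan chains of length two, so
`m • ηₘ = 0`, forcing `m = 0`.
-/

open Finset Polynomial

theorem LinearMap.injective_of_comp_self_eq_neg_id {R M : Type*} [Ring R] [AddCommGroup M]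
    [Module R M] {f : M →ₗ[R] M} (hf : f ∘ₗ f = -LinearMap.id) : Function.Injective f := by
  refine (injective_iff_map_eq_zero f).mpr fun x hx => ?_
  simpa [hx] using (LinearMap.congr_fun hf x).symm

theorem LinearMap.IsSymmetric.eq_zero_of_jordan_chain {E : Type*} [NormedAddCommGroup E]
    [InnerProductSpace ℝ E] {T : E →ₗ[ℝ] E} (hT : T.IsSymmetric) {μ : ℝ} {x y : E}
    (hx : T x = μ • x) (hy : T y - μ • y = x) : x = 0 := by
  rw [← inner_self_eq_zero (𝕜 := ℝ)]
  calc inner ℝ x x = inner ℝ (T y - μ • y) x := by rw [hy]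
    _ = inner ℝ y (T x) - μ * inner ℝ y x := by rw [inner_sub_left, hT, real_inner_smul_left]
    _ = 0 := by rw [hx, real_inner_smul_right, sub_self]

theorem eq_zero_of_forall_sum_range_pow_smul_eq_zero {K V : Type*} [Field K] [Infinite K]
    [AddCommGroup V] [Module K V] {n : ℕ} {c : ℕ → V}
    (h : ∀ t : K, ∑ j ∈ range n, t ^ j • c j = 0) {j : ℕ} (hj : j < n) : c j = 0 := by
  refine (Module.forall_dual_apply_eq_zero_iff K (c j)).mp fun φ => ?_
  have hp : ∑ k ∈ range n, C (φ (c k)) * X ^ k = 0 := Polynomial.funext fun t => by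
    simpa only [eval_finsetSum, eval_mul, eval_C, eval_X_pow, eval_zero, map_sum, map_smul,
      smul_eq_mul, map_zero, mul_comm] using congrArg φ (h t)
  simpa [finsetSum_coeff, coeff_C_mul_X_pow, hj] using congrArg (coeff · j) hp

theorem eq_zero_of_forall_sum_range_succ_pow_smul_add {K V : Type*} [Field K] [Infinite K]
    [AddCommGroup V] [Module K V] {n : ℕ} {a b : ℕ → V}
    (h : ∀ t : K, ∑ j ∈ range (n + 1), t ^ j • a j + ∑ j ∈ range n, t ^ j • b j = 0) :
    a n = 0 ∧ ∀ j < n, a j + b j = 0 := by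
  set c : ℕ → V := fun j => if j < n then a j + b j else a n with hc
  have hsum : ∀ t : K, ∑ j ∈ range (n + 1), t ^ j • c j = 0 := fun t => by
    rw [← h t, sum_range_succ, sum_range_succ, add_right_comm, ← sum_add_distrib]
    congr 1
    · refine sum_congr rfl fun j hj => ?_
      simp only [hc, mem_range.mp hj, if_true, smul_add]
    · simp [hc]
  refine ⟨?_, fun j hj => ?_⟩
  · simpa [hc] using eq_zero_of_forall_sum_range_pow_smul_eq_zero hsum n.lt_succ_self
  · simpa [hc, hj] using
      eq_zero_of_forall_sum_range_pow_smul_eq_zero hsum (hj.trans n.lt_succ_self)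

theorem hasDerivAt_sum_range_pow_smul {V : Type*} [NormedAddCommGroup V] [NormedSpace ℝ V]
    (n : ℕ) (η : ℕ → V) (t : ℝ) :
    HasDerivAt (fun s : ℝ => ∑ j ∈ range (n + 1), s ^ j • η j)
      (∑ j ∈ range n, t ^ j • ((j + 1 : ℝ) • η (j + 1))) t := by
  convert HasDerivAt.fun_sum fun j _ => (hasDerivAt_pow j t).smul_const (η j) using 1
  rw [sum_range_succ']
  simp [smul_smul, mul_comm]

theorem hasDerivAt_rpow_smul_comp_log {V : Type*} [NormedAddCommGroup V] [NormedSpace ℝ V]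
    {g : ℝ → V} {g' : V} {r : ℝ} (hr : 0 < r) (a : ℝ) (hg : HasDerivAt g g' (Real.log r)) :
    HasDerivAt (fun s : ℝ => s ^ a • g (Real.log s))
      (r ^ (a - 1) • (a • g (Real.log r) + g')) r := by
  refine ((Real.hasDerivAt_rpow_const (p := a) (Or.inl hr.ne')).smul
    (hg.scomp r (Real.hasDerivAt_log hr.ne'))).congr_deriv ?_
  rw [Real.rpow_sub_one hr.ne', smul_add, smul_smul, smul_smul, add_comm]
  congr 2; ring

/-- The operator `D⁻` on the cone, with `E0` modelling Clifford multiplication by `dr`. -/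
noncomputable def coneDiracMinus {W : Type*} [NormedAddCommGroup W] [NormedSpace ℝ W]
    (E0 D : W →ₗ[ℝ] W) (f : ℝ → W) (r : ℝ) : W :=
  E0 (deriv f r + (1 / r) • ((7 / 2 : ℝ) • f r - D (f r)))

theorem smul_sub_add_eq_zero_of_coneDiracMinus_eq_zero {W : Type*} [NormedAddCommGroup W]
    [NormedSpace ℝ W] {E0 D : W →ₗ[ℝ] W} (hE0 : Function.Injective E0) {lam : ℝ}
    {g g' : ℝ → W} (hg : ∀ t, HasDerivAt g (g' t) t)
    (h : ∀ r : ℝ, 0 < r → coneDiracMinus E0 D (fun s => s ^ (lam - 1) • g (Real.log s)) r = 0)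
    (t : ℝ) : (lam + 5 / 2) • g t - D (g t) + g' t = 0 := by
  set r := Real.exp t
  have hr : 0 < r := Real.exp_pos t
  have h := h r hr
  rw [coneDiracMinus, (hasDerivAt_rpow_smul_comp_log hr _ (hg _)).deriv, ← map_zero E0] at h
  have h := hE0 h
  rw [Real.log_exp, map_smul] at h
  have hpow : (1 / r) * r ^ (lam - 1) = r ^ (lam - 1 - 1) := by
    rw [Real.rpow_sub_one hr.ne' (lam - 1), one_div, inv_mul_eq_div]
  refine (smul_eq_zero_iff_right (Real.rpow_pos_of_pos hr (lam - 1 - 1)).ne').mp ?_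
  rw [← h, ← hpow]
  generalize r ^ (lam - 1) = c
  module

/-- If D⁻(r^{λ−1} Σ_{j=0}^m (log r)^j η_j) = 0 with η_m ≠ 0, where
D⁻ = dr·(∂/∂r + (1/r)(7/2 − D_{A_Σ})) and D_{A_Σ} is self-adjoint, then m = 0:
homogeneous solutions have no polynomial log terms. -/
theorem stmt_9 {W : Type*} [NormedAddCommGroup W] [InnerProductSpace ℝ W]
    (E0 D : W →ₗ[ℝ] W) (hE0 : E0 ∘ₗ E0 = -LinearMap.id)
    (hsa : ∀ x y : W, (inner ℝ (D x) y : ℝ) = inner ℝ x (D y))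
    (lam : ℝ) (m : ℕ) (η : ℕ → W) (hm : η m ≠ 0)
    (hker : ∀ r : ℝ, 0 < r →
        E0 (deriv (fun s : ℝ =>
              (s ^ (lam - 1)) • ∑ j ∈ Finset.range (m + 1), (Real.log s) ^ j • η j) r +
          (1 / r) • ((7 / 2 : ℝ) •
              ((r ^ (lam - 1)) • ∑ j ∈ Finset.range (m + 1), (Real.log r) ^ j • η j) -
            D ((r ^ (lam - 1)) • ∑ j ∈ Finset.range (m + 1), (Real.log r) ^ j • η j))) = 0) :
    m = 0 := by
  by_contra hm0
  obtain ⟨k, rfl⟩ := Nat.exists_eq_succ_of_ne_zero hm0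
  have hpoly := smul_sub_add_eq_zero_of_coneDiracMinus_eq_zero
    (LinearMap.injective_of_comp_self_eq_neg_id hE0) (hasDerivAt_sum_range_pow_smul (k + 1) η) hker
  obtain ⟨htop, hsub⟩ := eq_zero_of_forall_sum_range_succ_pow_smul_add (n := k + 1)
    (a := fun j => (lam + 5 / 2) • η j - D (η j)) (b := fun j => ((j : ℝ) + 1) • η (j + 1))
    fun t => by
      rw [← hpoly t, map_sum, smul_sum, ← sum_sub_distrib]
      simp only [map_smul, smul_sub, smul_comm (t ^ _) (lam + 5 / 2)]
  refine hm (LinearMap.IsSymmetric.eq_zero_of_jordan_chain hsa (μ := lam + 5 / 2)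
    (y := ((k : ℝ) + 1)⁻¹ • η k) (sub_eq_zero.mp htop).symm ?_)
  have hchain : D (η k) - (lam + 5 / 2) • η k = ((k : ℝ) + 1) • η (k + 1) := by
    linear_combination (norm := module) -hsub k k.lt_succ_self
  rw [map_smul, smul_comm (lam + 5 / 2), ← smul_sub, hchain,
    inv_smul_smul₀ (by positivity : (k : ℝ) + 1 ≠ 0)]
end

section
/- Let Δ ≅ ℂ ⊕ m*_ℂ be the 8-dimensional spin representation of spin(7) with orthonormal basis e⁰, e¹,…,e⁷ and G₂-invariant 4-form Φ = e⁰∧φ + *φ. The element Ĩ_a := −e⁰∧e^a + (1/3) e^a ⌟ φ of Λ²(Δ)* satisfies Ĩ_a ⌟ Φ = −Ĩ_a, i.e., Ĩ_a lies in Λ²₂₁. -/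
/-!
Split the indices of Δ into `0` (for e⁰) and the seven indices of ℝ⁷. Tracing the quadratic
identities for the structure constants gives, in dimension `n`,
`φ_{axy} φ_{xyc} = (n - 1) δ_{ac}` and `φ_{axy} ψ_{xybc} = (n - 3) φ_{abc}`.
With `n = 7` the components of `Ĩ_a ⌟ Φ` are `½ · ⅓ · 6 δ_{ac} = δ_{ac}` at `(0, c)` and
`½ (-2 φ_{abc} + ⅓ · 4 φ_{abc}) = -⅓ φ_{abc}` at `(b, c)`, which are those of `-Ĩ_a`.
-/

open Finset

/-- The 2-form Ĩ_a = −e⁰∧e^a + (1/3) e^a ⌟ φ on Δ ≅ ℝ⁸ (index 0 = e⁰), in components: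
Ĩ_a(0,b) = −δ_{ab}, Ĩ_a(b,0) = δ_{ab}, Ĩ_a(b,c) = (1/3)φ_{abc}. -/
noncomputable def Itil (φ : Fin 7 → Fin 7 → Fin 7 → ℝ) (a : Fin 7) : Fin 8 → Fin 8 → ℝ :=
  Fin.cons
    (Fin.cons (0 : ℝ) fun b => -(if a = b then (1 : ℝ) else 0))
    (fun b => Fin.cons (if a = b then (1 : ℝ) else 0) (fun c => (1 / 3) * φ a b c))

/-- The Spin(7) 4-form Φ = e⁰∧φ + ψ in components on Fin 8 (index 0 = e⁰). -/
noncomputable def BigPhi (φ : Fin 7 → Fin 7 → Fin 7 → ℝ) (ψ : Fin 7 → Fin 7 → Fin 7 → Fin 7 → ℝ) :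
    Fin 8 → Fin 8 → Fin 8 → Fin 8 → ℝ :=
  Fin.cons
    (Fin.cons (fun _ _ => 0)
      (fun b => Fin.cons (fun _ => 0) (fun c => Fin.cons 0 (fun d => φ b c d))))
    (fun a => Fin.cons
      (Fin.cons (fun _ => 0) (fun c => Fin.cons 0 (fun d => -(φ a c d))))
      (fun b => Fin.cons
        (Fin.cons 0 (fun d => φ a b d))
        (fun c => Fin.cons (-(φ a b c)) (fun d => ψ a b c d))))

theorem phi_cyclic {ι : Type*} {φ : ι → ι → ι → ℝ} (hφ1 : ∀ i j k, φ i j k = -φ j i k)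
    (hφ2 : ∀ i j k, φ i j k = -φ i k j) (i j k : ι) : φ i j k = φ k i j := by
  rw [hφ2, hφ1, neg_neg]

section StructureConstants

variable {ι : Type*} [Fintype ι] [DecidableEq ι] {φ : ι → ι → ι → ℝ} {ψ : ι → ι → ι → ι → ℝ}

theorem sum_phi_mul_phi (hφ2 : ∀ i j k, φ i j k = -φ i k j)
    (hψ2 : ∀ i j k l, ψ i j k l = -ψ i k j l)
    (h1 : ∀ i j a b, ∑ k, φ i j k * φ a b k =
      (if i = a then (1:ℝ) else 0) * (if j = b then 1 else 0) -
        (if i = b then (1:ℝ) else 0) * (if j = a then 1 else 0) + ψ i j a b)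
    (a c : ι) :
    ∑ x, ∑ y, φ a x y * φ x y c = (Fintype.card ι - 1) * (if a = c then 1 else 0) := by
  have row (x : ι) : ∑ y, φ a x y * φ x y c =
      (if a = c then 1 else 0) - (if a = x then 1 else 0) * (if x = c then 1 else 0) := by
    have hψ : ψ a x x c = 0 := by linarith [hψ2 a x x c]
    calc ∑ y, φ a x y * φ x y c = -∑ y, φ a x y * φ x c y := by
          rw [← sum_neg_distrib]; exact sum_congr rfl fun y _ => by rw [hφ2 x y c]; ring
      _ = _ := by rw [h1, hψ, if_pos rfl]; ring
  simp only [row, sum_sub_distrib, sum_const, card_univ, nsmul_eq_mul, sum_boole_mul,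
    mem_univ, if_true]
  split_ifs <;> ring

theorem sum_phi_mul_psi (hφ1 : ∀ i j k, φ i j k = -φ j i k) (hφ2 : ∀ i j k, φ i j k = -φ i k j)
    (hψ2 : ∀ i j k l, ψ i j k l = -ψ i k j l)
    (hψ3 : ∀ i j k l, ψ i j k l = -ψ i j l k)
    (h2 : ∀ i j a b c, ∑ k, φ i j k * ψ a b c k =
      -((if i = a then (1:ℝ) else 0) * φ j b c) - (if i = b then (1:ℝ) else 0) * φ a j c -
        (if i = c then (1:ℝ) else 0) * φ a b j + (if j = a then (1:ℝ) else 0) * φ i b c +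
        (if j = b then (1:ℝ) else 0) * φ a i c + (if j = c then (1:ℝ) else 0) * φ a b i)
    (a b c : ι) :
    ∑ x, ∑ y, φ a x y * ψ x y b c = (Fintype.card ι - 3) * φ a b c := by
  have hψ (x y : ι) : ψ x y b c = ψ x b c y := by rw [hψ2, hψ3, neg_neg]
  have hdiag (x y : ι) : φ x x y = 0 := by linarith [hφ1 x x y]
  have hdiag' (x y : ι) : φ x y x = 0 := by rw [phi_cyclic hφ1 hφ2, hdiag]
  simp only [hψ, h2]
  simp [sum_add_distrib, ite_mul, hdiag, hdiag', hφ1 b a c, hφ1 c b a,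
    phi_cyclic hφ1 hφ2 b c a]
  ring

end StructureConstants

theorem stmt_13_general (φ : Fin 7 → Fin 7 → Fin 7 → ℝ) (ψ : Fin 7 → Fin 7 → Fin 7 → Fin 7 → ℝ)
    (hφ1 : ∀ i j k, φ i j k = -φ j i k)
    (hφ2 : ∀ i j k, φ i j k = -φ i k j)
    (hψ2 : ∀ i j k l, ψ i j k l = -ψ i k j l)
    (hψ3 : ∀ i j k l, ψ i j k l = -ψ i j l k)
    (h1 : ∀ i j a b, ∑ k, φ i j k * φ a b k =
      (if i = a then (1:ℝ) else 0) * (if j = b then 1 else 0) -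
        (if i = b then (1:ℝ) else 0) * (if j = a then 1 else 0) + ψ i j a b)
    (h2 : ∀ i j a b c, ∑ k, φ i j k * ψ a b c k =
      -((if i = a then (1:ℝ) else 0) * φ j b c) - (if i = b then (1:ℝ) else 0) * φ a j c -
        (if i = c then (1:ℝ) else 0) * φ a b j + (if j = a then (1:ℝ) else 0) * φ i b c +
        (if j = b then (1:ℝ) else 0) * φ a i c + (if j = c then (1:ℝ) else 0) * φ a b i)
    (a : Fin 7) (μ ν : Fin 8) :
    (1 / 2 : ℝ) * ∑ ρ : Fin 8, ∑ σ : Fin 8, Itil φ a ρ σ * BigPhi φ ψ ρ σ μ ν =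
      -(Itil φ a μ ν) := by
  rcases Fin.eq_zero_or_eq_succ μ with rfl | ⟨b, rfl⟩ <;>
    rcases Fin.eq_zero_or_eq_succ ν with rfl | ⟨c, rfl⟩ <;>
    simp only [Fin.sum_univ_succ (n := 7), Itil, BigPhi, Fin.cons_zero, Fin.cons_succ]
  all_goals
    simp only [mul_zero, sum_const_zero, add_zero, mul_neg, neg_mul, sum_neg_distrib,
      sum_add_distrib, mul_assoc, ← mul_sum, sum_phi_mul_phi hφ2 hψ2 h1,
      sum_phi_mul_psi hφ1 hφ2 hψ2 hψ3 h2, ite_mul, one_mul, zero_mul, sum_ite_eq, mem_univ,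
      if_true, Fintype.card_fin, Nat.cast_ofNat]
    ring

/-- The element Ĩ_a = −e⁰∧e^a + (1/3) e^a ⌟ φ of Λ²(Δ)* satisfies
Ĩ_a ⌟ Φ = −Ĩ_a (componentwise, (α⌟Φ)_{μν} = ½ α_{ρσ} Φ_{ρσμν}), i.e. Ĩ_a ∈ Λ²₂₁,
given the G₂ structure-constant identities for φ and ψ. -/
theorem stmt_13 (φ : Fin 7 → Fin 7 → Fin 7 → ℝ) (ψ : Fin 7 → Fin 7 → Fin 7 → Fin 7 → ℝ)
    (hφ1 : ∀ i j k, φ i j k = -φ j i k)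
    (hφ2 : ∀ i j k, φ i j k = -φ i k j)
    (hψ1 : ∀ i j k l, ψ i j k l = -ψ j i k l)
    (hψ2 : ∀ i j k l, ψ i j k l = -ψ i k j l)
    (hψ3 : ∀ i j k l, ψ i j k l = -ψ i j l k)
    (h1 : ∀ i j a b, ∑ k, φ i j k * φ a b k =
      (if i = a then (1:ℝ) else 0) * (if j = b then 1 else 0) -
        (if i = b then (1:ℝ) else 0) * (if j = a then 1 else 0) + ψ i j a b)
    (h2 : ∀ i j a b c, ∑ k, φ i j k * ψ a b c k =
      -((if i = a then (1:ℝ) else 0) * φ j b c) - (if i = b then (1:ℝ) else 0) * φ a j c -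
        (if i = c then (1:ℝ) else 0) * φ a b j + (if j = a then (1:ℝ) else 0) * φ i b c +
        (if j = b then (1:ℝ) else 0) * φ a i c + (if j = c then (1:ℝ) else 0) * φ a b i)
    (a : Fin 7) (μ ν : Fin 8) :
    (1 / 2 : ℝ) * ∑ ρ : Fin 8, ∑ σ : Fin 8, Itil φ a ρ σ * BigPhi φ ψ ρ σ μ ν =
      -(Itil φ a μ ν) :=
  stmt_13_general φ ψ hφ1 hφ2 hψ2 hψ3 h1 h2 a μ ν
end

section
/- For the Spin(7)-invariant connection A_t = e^i I_i + φ(t) e^a I_a on the homogeneous bundle over S⁷ = Spin(7)/G₂ with curvature components F_{0a} = φ'(t) I_a and F_{bc} = (φ² − 1) f^i_{bc} I_i + (φ² − φ) f_{abc} I_a, the Spin(7)-instanton equation F_{0a} = (3/4) f_{abc} F_{bc} is equivalent to the scalar ODE φ' = 2(φ² − φ), using the structure constant relations f_{abc} = −(2/3)φ_{abc}, φ_{abc}φ_{dbc} = 6δ_{ad}, and f_{abc} f^i_{bc} = 0. -/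
/-! Since `f_{abc} f^i_{bc} = 0`, contracting `F_{bc}` with `f_{abc}` kills its `g₂`-part, while
`f_{abc} f_{dbc} = (4/9) φ_{abc} φ_{dbc} = (8/3) δ_{ad}` turns its `m`-part into
`(8/3)(φ² − φ) I_a`. The instanton equation therefore reads `(φ' − 2(φ² − φ)) I_a = 0`, and
`I_a ≠ 0`. -/

open Finset

section Contraction

variable {R M ι κ : Type*} [CommSemiring R] [AddCommMonoid M] [Module R M] [Fintype ι]

theorem sum_sum_smul_sum_smul [Fintype κ] (g : ι → ι → R) (h : κ → ι → ι → R) (v : κ → M) :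
    ∑ b, ∑ c, g b c • ∑ i, h i b c • v i = ∑ i, (∑ b, ∑ c, g b c * h i b c) • v i := by
  simp only [smul_sum, smul_smul, sum_smul]
  exact (sum_congr rfl fun _ _ => sum_comm).trans sum_comm

theorem sum_sum_smul_add_smul (g : ι → ι → R) (p q : R) (X Y : ι → ι → M) :
    ∑ b, ∑ c, g b c • (p • X b c + q • Y b c) =
      p • ∑ b, ∑ c, g b c • X b c + q • ∑ b, ∑ c, g b c • Y b c := by
  simp only [smul_add, sum_add_distrib, smul_sum, smul_comm p, smul_comm q]

theorem sum_sum_mul_of_eq_const_mul [DecidableEq κ] (f g : κ → ι → ι → R) (k m : R)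
    (hf : ∀ a b c, f a b c = k * g a b c)
    (hg : ∀ a d, ∑ b, ∑ c, g a b c * g d b c = m * if a = d then 1 else 0) (a d : κ) :
    ∑ b, ∑ c, f a b c * f d b c = k ^ 2 * m * if a = d then 1 else 0 := calc
  _ = ∑ b, ∑ c, k ^ 2 * (g a b c * g d b c) := by
    simp only [hf]; exact sum_congr rfl fun _ _ => sum_congr rfl fun _ _ => by ring
  _ = _ := by rw [← sum_congr rfl fun _ _ => mul_sum .., ← mul_sum, hg, mul_assoc]

theorem sum_sum_smul_curvature_eq_smul [DecidableEq ι] [Fintype κ]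
    (Ia : ι → M) (Ii : κ → M) (f : ι → ι → ι → R) (fi : κ → ι → ι → R) (m : R)
    (hff : ∀ a d, ∑ b, ∑ c, f a b c * f d b c = m * if a = d then 1 else 0)
    (hffi : ∀ a i, ∑ b, ∑ c, f a b c * fi i b c = 0) (p q : R) (a : ι) :
    ∑ b, ∑ c, f a b c • (p • ∑ i, fi i b c • Ii i + q • ∑ d, f d b c • Ia d) =
      (m * q) • Ia a := by
  have h_g₂ : ∑ b, ∑ c, f a b c • ∑ i, fi i b c • Ii i = 0 := by
    simp only [sum_sum_smul_sum_smul, hffi, zero_smul, sum_const_zero]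
  have h_m : ∑ b, ∑ c, f a b c • ∑ d, f d b c • Ia d = m • Ia a := by
    simp only [sum_sum_smul_sum_smul, hff, mul_ite, mul_one, mul_zero, ite_smul, zero_smul,
      sum_ite_eq, mem_univ, if_true]
  rw [sum_sum_smul_add_smul, h_g₂, h_m, smul_zero, zero_add, smul_smul, mul_comm]

end Contraction

/-- For the Spin(7)-invariant connection A_t = eⁱ I_i + φ(t) e^a I_a on
S⁷ = Spin(7)/G₂, with curvature components F_{0a} = φ'(t) I_a and
F_{bc} = (φ² − 1) f^i_{bc} I_i + (φ² − φ) f_{abc} I_a, the Spin(7)-instanton equation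
F_{0a} = (3/4) f_{abc} F_{bc} is equivalent to the scalar ODE φ' = 2(φ² − φ), using the
structure constant relations f_{abc} = −(2/3)φ_{abc}, φ_{abc}φ_{dbc} = 6δ_{ad}
and f_{abc} f^i_{bc} = 0. -/
theorem stmt_19 {V : Type*} [AddCommGroup V] [Module ℝ V]
    (Ia : Fin 7 → V) (Ii : Fin 14 → V)
    (hInd : LinearIndependent ℝ Ia)
    (f : Fin 7 → Fin 7 → Fin 7 → ℝ) (fi : Fin 14 → Fin 7 → Fin 7 → ℝ)
    (φc : Fin 7 → Fin 7 → Fin 7 → ℝ)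
    (hf : ∀ a b c, f a b c = -(2 / 3 : ℝ) * φc a b c)
    (hφφ : ∀ a d, ∑ b, ∑ c, φc a b c * φc d b c = 6 * (if a = d then (1:ℝ) else 0))
    (hffi : ∀ a i, ∑ b, ∑ c, f a b c * fi i b c = 0)
    (φ : ℝ → ℝ) :
    (∀ t, ∀ a, deriv φ t • Ia a =
        (3 / 4 : ℝ) • ∑ b, ∑ c, f a b c •
          (((φ t) ^ 2 - 1) • ∑ i, fi i b c • Ii i +
            ((φ t) ^ 2 - φ t) • ∑ d, f d b c • Ia d)) ↔
      (∀ t, deriv φ t = 2 * ((φ t) ^ 2 - φ t)) := by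
  have hff := sum_sum_mul_of_eq_const_mul f φc _ _ hf hφφ
  have hcoef : ∀ q : ℝ, 3 / 4 * ((-(2 / 3)) ^ 2 * 6 * q) = 2 * q := fun q => by ring
  simp only [sum_sum_smul_curvature_eq_smul Ia Ii f fi _ hff hffi, smul_smul, hcoef]
  exact ⟨fun h t => smul_left_injective ℝ (hInd.ne_zero 0) (h t 0), fun h t _ => by rw [h t]⟩
end
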